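/- arXiv:1812.06825 — 3 statements merged into one kernel-verified Lean document; each statement's English description precedes it below -/
import Mathlib

section
/- For every β > 0 and every x ∈ ℝ, the third derivative of f_β satisfies |f_β‴(x)| ≤ 3/β²; in particular the derivative f_β′ is (2, 3/β²)-smooth, i.e., f_β′ is twice continuously differentiable with second derivative bounded in absolute value by 3/β². -/
/-!
Writing `t = x - 1/2` and `s = √(t² + β²)`, one has `f_β(x) = (-t + s) / 2`, so
`f_β'' = β² / (2 s³)` and `f_β''' = -3 β² t / (2 s⁵)`. Since `|t| ≤ s` and `|β| ≤ s`, this gives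
`|f_β'''| ≤ 3 / (2 β²)`.
-/

open Real

section SqrtSqAddSq

variable {β : ℝ}

theorem hasDerivAt_sqrt_sq_add_sq (hβ : β ≠ 0) (t : ℝ) :
    HasDerivAt (fun t : ℝ => √(t ^ 2 + β ^ 2)) (t / √(t ^ 2 + β ^ 2)) t := by
  refine (((hasDerivAt_pow 2 t).add_const (β ^ 2)).sqrt (by positivity)).congr_deriv ?_
  field_simp
  norm_num

theorem hasDerivAt_div_sqrt_sq_add_sq (hβ : β ≠ 0) (t : ℝ) :
    HasDerivAt (fun t : ℝ => t / √(t ^ 2 + β ^ 2)) (β ^ 2 / √(t ^ 2 + β ^ 2) ^ 3) t := by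
  have hs : 0 < √(t ^ 2 + β ^ 2) := sqrt_pos.2 (by positivity)
  have hs2 : √(t ^ 2 + β ^ 2) ^ 2 = t ^ 2 + β ^ 2 := sq_sqrt (by positivity)
  refine ((hasDerivAt_id' t).div (hasDerivAt_sqrt_sq_add_sq hβ t) hs.ne').congr_deriv ?_
  field_simp
  linear_combination hs2

theorem hasDerivAt_inv_sqrt_sq_add_sq_pow_three (hβ : β ≠ 0) (t : ℝ) :
    HasDerivAt (fun t : ℝ => (√(t ^ 2 + β ^ 2) ^ 3)⁻¹) (-3 * t / √(t ^ 2 + β ^ 2) ^ 5) t := by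
  have hs : 0 < √(t ^ 2 + β ^ 2) := sqrt_pos.2 (by positivity)
  refine (((hasDerivAt_sqrt_sq_add_sq hβ t).fun_pow 3).fun_inv
    (pow_ne_zero 3 hs.ne')).congr_deriv ?_
  field_simp
  ring

theorem abs_div_sqrt_sq_add_sq_pow_five_le (hβ : β ≠ 0) (t : ℝ) :
    |t| / √(t ^ 2 + β ^ 2) ^ 5 ≤ 1 / β ^ 4 := by
  set s := √(t ^ 2 + β ^ 2)
  have hs : 0 < s := sqrt_pos.2 (by positivity)
  have ht : |t| ≤ s := by
    rw [← sqrt_sq_eq_abs]; exact sqrt_le_sqrt (le_add_of_nonneg_right (sq_nonneg β))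
  have hβs : |β| ≤ s := by
    rw [← sqrt_sq_eq_abs]; exact sqrt_le_sqrt (le_add_of_nonneg_left (sq_nonneg t))
  calc |t| / s ^ 5 ≤ s / s ^ 5 := by gcongr
    _ = 1 / s ^ 4 := by field_simp
    _ ≤ 1 / |β| ^ 4 := by gcongr
    _ = 1 / β ^ 4 := by rw [pow_abs, abs_of_nonneg (by positivity)]

end SqrtSqAddSq

noncomputable def centeredHinge (β t : ℝ) : ℝ := (-t + √(t ^ 2 + β ^ 2)) / 2

section CenteredHinge

variable {β : ℝ}

theorem contDiff_centeredHinge (hβ : β ≠ 0) {n : WithTop ℕ∞} : ContDiff ℝ n (centeredHinge β) :=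
  (contDiff_neg.add
    (((contDiff_id.pow 2).add contDiff_const).sqrt fun t => by positivity)).div_const 2

theorem deriv_centeredHinge (hβ : β ≠ 0) :
    deriv (centeredHinge β) = fun t => (-1 + t / √(t ^ 2 + β ^ 2)) / 2 :=
  funext fun t => (((hasDerivAt_neg t).add (hasDerivAt_sqrt_sq_add_sq hβ t)).div_const 2).deriv

theorem deriv_deriv_centeredHinge (hβ : β ≠ 0) :
    deriv (deriv (centeredHinge β)) = fun t => β ^ 2 / 2 * (√(t ^ 2 + β ^ 2) ^ 3)⁻¹ := by
  rw [deriv_centeredHinge hβ]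
  funext t
  rw [(((hasDerivAt_div_sqrt_sq_add_sq hβ t).const_add (-1)).div_const 2).deriv]
  ring

theorem deriv_deriv_deriv_centeredHinge (hβ : β ≠ 0) :
    deriv (deriv (deriv (centeredHinge β))) =
      fun t => β ^ 2 / 2 * (-3 * t / √(t ^ 2 + β ^ 2) ^ 5) := by
  rw [deriv_deriv_centeredHinge hβ]
  exact funext fun t => ((hasDerivAt_inv_sqrt_sq_add_sq_pow_three hβ t).const_mul _).deriv

theorem abs_deriv_deriv_deriv_centeredHinge_le (hβ : β ≠ 0) (t : ℝ) :
    |deriv (deriv (deriv (centeredHinge β))) t| ≤ 3 / (2 * β ^ 2) := by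
  rw [deriv_deriv_deriv_centeredHinge hβ]
  calc |β ^ 2 / 2 * (-3 * t / √(t ^ 2 + β ^ 2) ^ 5)|
      = 3 * β ^ 2 / 2 * (|t| / √(t ^ 2 + β ^ 2) ^ 5) := by
        rw [abs_mul, abs_div, abs_div, abs_mul, abs_of_nonneg (by positivity : (0 : ℝ) ≤ β ^ 2),
          abs_of_nonneg (by positivity : (0 : ℝ) ≤ √(t ^ 2 + β ^ 2) ^ 5)]
        norm_num
        ring
    _ ≤ 3 * β ^ 2 / 2 * (1 / β ^ 4) :=
        mul_le_mul_of_nonneg_left (abs_div_sqrt_sq_add_sq_pow_five_le hβ t) (by positivity)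
    _ = 3 / (2 * β ^ 2) := by field_simp

end CenteredHinge

/-- For β > 0, the third derivative of the smoothed hinge loss `f_β` is bounded
in absolute value by `3/β²`; in particular `f_β′` is twice continuously
differentiable with second derivative bounded in absolute value by `3/β²`. -/
theorem smoothed_hinge_deriv_smooth (β : ℝ) (hβ : 0 < β) :
    let f : ℝ → ℝ := fun x => (1 / 2 - x + Real.sqrt ((1 / 2 - x) ^ 2 + β ^ 2)) / 2
    ContDiff ℝ 2 (deriv f) ∧
    (∀ x : ℝ, |deriv (deriv (deriv f)) x| ≤ 3 / β ^ 2) := by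
  intro f
  have hf : f = fun x => centeredHinge β (x - 1 / 2) := by
    funext x
    simp only [f, centeredHinge]
    ring_nf
  have hshift (g : ℝ → ℝ) : deriv (fun x => g (x - 1 / 2)) = fun x => deriv g (x - 1 / 2) :=
    funext fun x => deriv_comp_sub_const ..
  rw [hf, hshift, hshift, hshift]
  refine ⟨((contDiff_centeredHinge hβ.ne').deriv' (n := 2)).comp (contDiff_id.sub contDiff_const),
    fun x => (abs_deriv_deriv_deriv_centeredHinge_le hβ.ne' _).trans ?_⟩
  gcongr
  linarith [pow_pos hβ 2]
end

section
/- Let f : [−1, 1] → [−1, 1] be a convex 1-Lipschitz function, let a be the right derivative of f at −1 and b the left derivative of f at 1 (which exist since f is convex and Lipschitz). Then there exist a probability measure μ on ℝ supported in [−1, 1] and a constant c ∈ ℝ such that for all θ ∈ [−1, 1], f(θ) = ((b − a)/2) · ∫ |θ − s| dμ(s) + ((a + b)/2) · θ + c. In other words, every 1-Lipschitz convex function on [−1,1] is, up to an additive constant, a nonnegative combination of an average of absolute-value (hinge-type) functions and a linear function. -/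
/-!
The right derivative `g` of `f`, extended by `a` to the left of `-1` and by `b` to the right of
`1`, is monotone, so (after right-continuous regularization, which changes it only at countably
many points) it is a Stieltjes function whose measure `ν` has mass `b - a` and lives on `[-1, 1]`.
Writing `g x = a + ν (Iic x)` and integrating from `-1` gives, by the layer-cake formula,
`f θ = f (-1) + a (θ + 1) + ∫ (θ - s)⁺ dν(s)`, and `(θ - s)⁺ = (|θ - s| + θ - s) / 2`.
Normalizing `ν` to a probability measure yields the claim.
-/

open MeasureTheory Set Filter Topology

namespace ConvexOn

variable {f : ℝ → ℝ} {u v a b x y : ℝ}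

lemma le_slope_of_hasDerivWithinAt_left_endpoint (hf : ConvexOn ℝ (Icc u v) f)
    (ha : HasDerivWithinAt f a (Ioi u) u) (hx : x ∈ Icc u v) (hy : y ∈ Icc u v) (hxy : x < y) :
    a ≤ slope f x y := by
  have hu : u ∈ Icc u v := ⟨le_rfl, hx.1.trans (hxy.le.trans hy.2)⟩
  rcases hx.1.eq_or_lt with rfl | hux
  · exact hf.le_slope_of_hasDerivWithinAt_Ioi hu hy hxy ha
  calc a ≤ slope f u x := hf.le_slope_of_hasDerivWithinAt_Ioi hu hx hux ha
    _ = slope f x u := slope_comm f u x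
    _ ≤ slope f x y := hf.slope_mono hx ⟨hu, hux.ne⟩ ⟨hy, hxy.ne'⟩ (hux.trans hxy).le

lemma slope_le_of_hasDerivWithinAt_right_endpoint (hf : ConvexOn ℝ (Icc u v) f)
    (hb : HasDerivWithinAt f b (Iio v) v) (hx : x ∈ Icc u v) (hy : y ∈ Icc u v) (hxy : x < y) :
    slope f x y ≤ b := by
  have hv : v ∈ Icc u v := ⟨hx.1.trans (hxy.le.trans hy.2), le_rfl⟩
  rcases hy.2.eq_or_lt with rfl | hyv
  · exact hf.slope_le_of_hasDerivWithinAt_Iio hx hv hxy hb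
  calc slope f x y ≤ slope f y v := by
        rw [slope_comm f x y]
        exact hf.slope_mono hy ⟨hx, hxy.ne⟩ ⟨hv, hyv.ne'⟩ (hxy.trans hyv).le
    _ ≤ b := hf.slope_le_of_hasDerivWithinAt_Iio hy hv hyv hb

lemma rightDeriv_mem_Icc (hf : ConvexOn ℝ (Icc u v) f) (ha : HasDerivWithinAt f a (Ioi u) u)
    (hb : HasDerivWithinAt f b (Iio v) v) (hx : x ∈ Ioo u v) :
    derivWithin f (Ioi x) x ∈ Icc a b := by
  have hx' : x ∈ interior (Icc u v) := by rwa [interior_Icc]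
  have hux : u ∈ Icc u v := ⟨le_rfl, (hx.1.trans hx.2).le⟩
  have hvx : v ∈ Icc u v := ⟨(hx.1.trans hx.2).le, le_rfl⟩
  constructor
  · calc a ≤ slope f u x :=
          hf.le_slope_of_hasDerivWithinAt_left_endpoint ha hux (Ioo_subset_Icc_self hx) hx.1
      _ ≤ derivWithin f (Iio x) x := hf.slope_le_leftDeriv_of_mem_interior hux hx' hx.1
      _ ≤ derivWithin f (Ioi x) x := hf.leftDeriv_le_rightDeriv_of_mem_interior hx'
  · calc derivWithin f (Ioi x) x ≤ slope f x v :=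
          hf.rightDeriv_le_slope_of_mem_interior hx' hvx hx.2
      _ ≤ b := hf.slope_le_of_hasDerivWithinAt_right_endpoint hb (Ioo_subset_Icc_self hx) hvx hx.2

end ConvexOn

noncomputable def extendedRightDeriv (f : ℝ → ℝ) (u v a b x : ℝ) : ℝ :=
  if x ≤ u then a else if x < v then derivWithin f (Ioi x) x else b

section extendedRightDeriv

variable {f : ℝ → ℝ} {u v a b x : ℝ}

lemma extendedRightDeriv_of_le (hx : x ≤ u) : extendedRightDeriv f u v a b x = a :=
  if_pos hx

lemma extendedRightDeriv_of_mem_Ioo (hx : x ∈ Ioo u v) :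
    extendedRightDeriv f u v a b x = derivWithin f (Ioi x) x := by
  simp [extendedRightDeriv, not_le.2 hx.1, hx.2]

lemma extendedRightDeriv_of_ge (huv : u < v) (hx : v ≤ x) :
    extendedRightDeriv f u v a b x = b := by
  simp [extendedRightDeriv, not_le.2 (huv.trans_le hx), not_lt.2 hx]

lemma extendedRightDeriv_mem_Icc (hf : ConvexOn ℝ (Icc u v) f)
    (ha : HasDerivWithinAt f a (Ioi u) u) (hb : HasDerivWithinAt f b (Iio v) v) (huv : u < v)
    (x : ℝ) : extendedRightDeriv f u v a b x ∈ Icc a b := by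
  have hab : a ≤ b :=
    (hf.le_slope_of_hasDerivWithinAt_left_endpoint ha (left_mem_Icc.2 huv.le)
      (right_mem_Icc.2 huv.le) huv).trans
    (hf.slope_le_of_hasDerivWithinAt_right_endpoint hb (left_mem_Icc.2 huv.le)
      (right_mem_Icc.2 huv.le) huv)
  rcases le_or_gt x u with hxu | hux
  · rw [extendedRightDeriv_of_le hxu]; exact ⟨le_rfl, hab⟩
  rcases lt_or_ge x v with hxv | hvx
  · rw [extendedRightDeriv_of_mem_Ioo ⟨hux, hxv⟩]
    exact hf.rightDeriv_mem_Icc ha hb ⟨hux, hxv⟩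
  · rw [extendedRightDeriv_of_ge huv hvx]; exact ⟨hab, le_rfl⟩

lemma monotone_extendedRightDeriv (hf : ConvexOn ℝ (Icc u v) f)
    (ha : HasDerivWithinAt f a (Ioi u) u) (hb : HasDerivWithinAt f b (Iio v) v) (huv : u < v) :
    Monotone (extendedRightDeriv f u v a b) := by
  intro x y hxy
  have hbounds := extendedRightDeriv_mem_Icc hf ha hb huv
  rcases le_or_gt x u with hxu | hux
  · rw [extendedRightDeriv_of_le hxu]; exact (hbounds y).1
  rcases le_or_gt v y with hvy | hyv
  · rw [extendedRightDeriv_of_ge huv hvy]; exact (hbounds x).2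
  have hx : x ∈ Ioo u v := ⟨hux, hxy.trans_lt hyv⟩
  have hy : y ∈ Ioo u v := ⟨hux.trans_le hxy, hyv⟩
  rw [extendedRightDeriv_of_mem_Ioo hx, extendedRightDeriv_of_mem_Ioo hy]
  exact hf.monotoneOn_rightDeriv (by rwa [interior_Icc]) (by rwa [interior_Icc]) hxy

lemma integral_extendedRightDeriv (hf : ConvexOn ℝ (Icc u v) f)
    (hcont : ContinuousOn f (Icc u v)) (ha : HasDerivWithinAt f a (Ioi u) u)
    (hb : HasDerivWithinAt f b (Iio v) v) (huv : u < v) {θ : ℝ} (hθ : θ ∈ Icc u v) :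
    ∫ x in u..θ, extendedRightDeriv f u v a b x = f θ - f u := by
  refine intervalIntegral.integral_eq_sub_of_hasDeriv_right_of_le hθ.1
    (hcont.mono (Icc_subset_Icc_right hθ.2)) (fun x hx ↦ ?_)
    (monotone_extendedRightDeriv hf ha hb huv).intervalIntegrable
  have hx' : x ∈ Ioo u v := ⟨hx.1, hx.2.trans_le hθ.2⟩
  rw [extendedRightDeriv_of_mem_Ioo hx']
  exact hf.hasDerivWithinAt_rightDeriv_of_mem_interior (by rwa [interior_Icc])

end extendedRightDeriv

namespace Monotone

variable {g : ℝ → ℝ} {u v l m : ℝ}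

lemma rightLim_ae_eq (hg : Monotone g) : Function.rightLim g =ᵐ[volume] g := by
  refine measure_mono_null (fun x hx ↦ ?_) (hg.countable_not_continuousAt.measure_zero volume)
  exact fun hcont ↦ hx (hcont.continuousWithinAt.rightLim_eq)

lemma stieltjesFunction_eqOn_Iio (hg : Monotone g) (h : EqOn g (fun _ ↦ l) (Iio u)) :
    EqOn hg.stieltjesFunction (fun _ ↦ l) (Iio u) := fun x hx ↦ by
  have hcont : ContinuousAt g x :=
    continuousAt_const.congr ((eventually_lt_nhds hx).mono fun _ hy ↦ (h hy).symm)
  exact hcont.continuousWithinAt.rightLim_eq.trans (h hx)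

lemma stieltjesFunction_eqOn_Ici (hg : Monotone g) (h : EqOn g (fun _ ↦ m) (Ici v)) :
    EqOn hg.stieltjesFunction (fun _ ↦ m) (Ici v) := fun x hx ↦ by
  have hcont : ContinuousWithinAt g (Ici x) x :=
    continuousWithinAt_const.congr (fun _ hy ↦ h (mem_Ici.2 (le_trans hx hy))) (h hx)
  exact hcont.rightLim_eq.trans (h hx)

end Monotone

namespace StieltjesFunction

variable (G : StieltjesFunction ℝ) {u v l m : ℝ}

lemma tendsto_atBot_of_eqOn (hl : EqOn G (fun _ ↦ l) (Iio u)) : Tendsto G atBot (𝓝 l) :=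
  tendsto_const_nhds.congr' ((eventually_lt_atBot u).mono fun _ hx ↦ (hl hx).symm)

lemma tendsto_atTop_of_eqOn (hm : EqOn G (fun _ ↦ m) (Ici v)) : Tendsto G atTop (𝓝 m) :=
  tendsto_const_nhds.congr' ((eventually_ge_atTop v).mono fun _ hx ↦ (hm hx).symm)

lemma measure_compl_Icc_eq_zero (hl : EqOn G (fun _ ↦ l) (Iio u))
    (hm : EqOn G (fun _ ↦ m) (Ici v)) : G.measure (Icc u v)ᶜ = 0 := by
  have hcompl : (Icc u v)ᶜ = Iio u ∪ Ioi v := by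
    ext x; simp only [mem_compl_iff, mem_Icc, not_and_or, not_le, mem_union, mem_Iio, mem_Ioi]
  have hleft : Function.leftLim G u = l :=
    leftLim_eq_of_tendsto (tendsto_const_nhds.congr' (eventually_nhdsWithin_of_forall
      fun _ hx ↦ (hl hx).symm))
  rw [hcompl, measure_union_null_iff, G.measure_Iio (G.tendsto_atBot_of_eqOn hl), hleft,
    G.measure_Ioi (G.tendsto_atTop_of_eqOn hm), hm (mem_Ici.2 le_rfl)]
  simp

end StieltjesFunction

lemma integral_max_sub_eq_integral_measureReal_Iic (ν : Measure ℝ) [IsFiniteMeasure ν]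
    {u θ : ℝ} (hν : ν (Iio u) = 0) (huθ : u ≤ θ) :
    ∫ s, max (θ - s) 0 ∂ν = ∫ x in u..θ, ν.real (Iic x) := by
  have hu : ∀ᵐ s ∂ν, u ≤ s :=
    (measure_eq_zero_iff_ae_notMem.1 hν).mono fun _ hs ↦ not_lt.1 hs
  have hint : Integrable (fun s ↦ max (θ - s) 0) ν := by
    refine Integrable.mono' (integrable_const (θ - u)) (by fun_prop) ?_
    filter_upwards [hu] with s hs
    rw [Real.norm_of_nonneg (le_max_right _ _)]
    exact max_le (by linarith) (by linarith)
  have hlevel : ∀ t ∈ Ioc (0 : ℝ) (θ - u),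
      ν.real {s | t ≤ max (θ - s) 0} = ν.real (Iic (θ - t)) := by
    intro t ht
    congr 1
    ext s
    simp only [mem_ofPred_eq, mem_Iic, le_max_iff]
    constructor
    · rintro (h | h) <;> linarith [ht.1]
    · intro h; left; linarith
  rw [hint.integral_eq_integral_Ioc_meas_le (M := θ - u) (ae_of_all _ fun _ ↦ le_max_right _ _)
      (by filter_upwards [hu] with s hs using max_le (by linarith) (by linarith)),
    setIntegral_congr_fun measurableSet_Ioc hlevel,
    ← intervalIntegral.integral_of_le (by linarith),
    intervalIntegral.integral_comp_sub_left (fun x ↦ ν.real (Iic x)) θ]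
  simp

lemma integral_max_sub_eq_of_isProbabilityMeasure (μ : Measure ℝ) [IsProbabilityMeasure μ]
    (hμ : Integrable (fun s ↦ s) μ) (θ : ℝ) :
    ∫ s, max (θ - s) 0 ∂μ = ((∫ s, |θ - s| ∂μ) + θ - ∫ s, s ∂μ) / 2 := by
  have hlin : Integrable (fun s ↦ θ - s) μ := (integrable_const θ).sub hμ
  have hmax : ∀ s : ℝ, max (θ - s) 0 = (|θ - s| + (θ - s)) / 2 := by
    intro s
    rcases le_total (θ - s) 0 with h | h
    · rw [max_eq_right h, abs_of_nonpos h]; ring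
    · rw [max_eq_left h, abs_of_nonneg h]; ring
  simp_rw [hmax]
  rw [integral_div, integral_add hlin.abs hlin, integral_sub (integrable_const θ) hμ,
    integral_const]
  simp [add_sub_assoc]

lemma exists_isProbabilityMeasure_integral_eq {α : Type*} [MeasurableSpace α] (ν : Measure α)
    [IsFiniteMeasure ν] {s : Set α} (hs : MeasurableSet s) (hne : s.Nonempty)
    (hν : ν sᶜ = 0) :
    ∃ μ : Measure α, IsProbabilityMeasure μ ∧ μ sᶜ = 0 ∧
      ∀ φ : α → ℝ, ∫ x, φ x ∂ν = ν.real univ * ∫ x, φ x ∂μ := by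
  rcases eq_zero_or_neZero ν with rfl | hν0
  · obtain ⟨x₀, hx₀⟩ := hne
    exact ⟨Measure.dirac x₀, inferInstance, by simp [Measure.dirac_apply' _ hs.compl, hx₀],
      by simp⟩
  refine ⟨(ν univ)⁻¹ • ν, inferInstance, by simp [hν], fun φ ↦ ?_⟩
  rw [integral_smul_measure, smul_eq_mul, ← mul_assoc, measureReal_def, ENNReal.toReal_inv,
    mul_inv_cancel₀ (by simp [ENNReal.toReal_eq_zero_iff, NeZero.ne]), one_mul]

theorem ConvexOn.exists_measure_eq_add_integral_max_sub {f : ℝ → ℝ} {u v a b : ℝ}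
    (hf : ConvexOn ℝ (Icc u v) f) (hcont : ContinuousOn f (Icc u v))
    (ha : HasDerivWithinAt f a (Ioi u) u) (hb : HasDerivWithinAt f b (Iio v) v) (huv : u < v) :
    ∃ ν : Measure ℝ, IsFiniteMeasure ν ∧ ν.real univ = b - a ∧ ν (Icc u v)ᶜ = 0 ∧
      ∀ θ ∈ Icc u v, f θ = f u + a * (θ - u) + ∫ s, max (θ - s) 0 ∂ν := by
  set g := extendedRightDeriv f u v a b
  have hg : Monotone g := monotone_extendedRightDeriv hf ha hb huv
  have hab : a ≤ b := nonempty_Icc.1 ⟨_, extendedRightDeriv_mem_Icc hf ha hb huv 0⟩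
  set G := hg.stieltjesFunction
  have hGa : EqOn G (fun _ ↦ a) (Iio u) :=
    hg.stieltjesFunction_eqOn_Iio fun _ hx ↦ extendedRightDeriv_of_le (le_of_lt hx)
  have hGb : EqOn G (fun _ ↦ b) (Ici v) :=
    hg.stieltjesFunction_eqOn_Ici fun _ hx ↦ extendedRightDeriv_of_ge huv hx
  have hbot := G.tendsto_atBot_of_eqOn hGa
  have htop := G.tendsto_atTop_of_eqOn hGb
  have hfin := G.isFiniteMeasure hbot htop
  have hsupp := G.measure_compl_Icc_eq_zero hGa hGb
  refine ⟨G.measure, hfin, ?_, hsupp, fun θ hθ ↦ ?_⟩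
  · rw [measureReal_def, G.measure_univ hbot htop, ENNReal.toReal_ofReal (sub_nonneg.2 hab)]
  have hG : ∀ x, G x = a + G.measure.real (Iic x) := fun x ↦ by
    have hax : a ≤ G x :=
      (extendedRightDeriv_mem_Icc hf ha hb huv x).1.trans (hg.le_rightLim le_rfl)
    rw [measureReal_def, G.measure_Iic hbot, ENNReal.toReal_ofReal (sub_nonneg.2 hax)]
    ring
  have hIic : IntervalIntegrable (fun x ↦ G.measure.real (Iic x)) volume u θ :=
    (show Monotone fun x ↦ G.measure.real (Iic x) from
      fun _ _ hxy ↦ measureReal_mono (Iic_subset_Iic.2 hxy)).intervalIntegrable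
  calc f θ = f u + ∫ x in u..θ, g x := by
        rw [integral_extendedRightDeriv hf hcont ha hb huv hθ]; ring
    _ = f u + ∫ x in u..θ, (a + G.measure.real (Iic x)) := by
        rw [intervalIntegral.integral_congr_ae
          (hg.rightLim_ae_eq.mono fun x hx _ ↦ hx.symm.trans (hG x))]
    _ = f u + a * (θ - u) + ∫ s, max (θ - s) 0 ∂G.measure := by
        rw [intervalIntegral.integral_add intervalIntegrable_const hIic,
          integral_max_sub_eq_integral_measureReal_Iic _
            (measure_mono_null (fun x hx ↦ fun h ↦ not_le.2 hx h.1) hsupp) hθ.1]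
        simp only [intervalIntegral.integral_const, smul_eq_mul]
        ring

theorem convex_lipschitz_hinge_representation_general
    (f : ℝ → ℝ)
    (hconv : ConvexOn ℝ (Set.Icc (-1 : ℝ) 1) f)
    (hlip : ∀ x ∈ Set.Icc (-1 : ℝ) 1, ∀ y ∈ Set.Icc (-1 : ℝ) 1, |f x - f y| ≤ |x - y|)
    (a b : ℝ)
    (ha : HasDerivWithinAt f a (Set.Ici (-1 : ℝ)) (-1))
    (hb : HasDerivWithinAt f b (Set.Iic (1 : ℝ)) 1) :
    ∃ (μ : Measure ℝ) (_ : IsProbabilityMeasure μ) (c : ℝ),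
      μ (Set.Icc (-1 : ℝ) 1)ᶜ = 0 ∧
      ∀ θ ∈ Set.Icc (-1 : ℝ) 1,
        f θ = (b - a) / 2 * (∫ s, |θ - s| ∂μ) + (a + b) / 2 * θ + c := by
  have hcont : ContinuousOn f (Icc (-1) 1) :=
    (LipschitzOnWith.of_dist_le_mul (K := 1) fun x hx y hy ↦ by
      simpa [Real.dist_eq] using hlip x hx y hy).continuousOn
  obtain ⟨ν, _, hmass, hνsupp, hrepr⟩ := hconv.exists_measure_eq_add_integral_max_sub hcont
    (ha.mono Ioi_subset_Ici_self) (hb.mono Iio_subset_Iic_self) (by norm_num)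
  obtain ⟨μ, hμ, hμsupp, hνμ⟩ :=
    exists_isProbabilityMeasure_integral_eq ν measurableSet_Icc (nonempty_Icc.2 (by norm_num))
      hνsupp
  have hid : Integrable (fun s ↦ s) μ :=
    (integrable_const (1 : ℝ)).mono' (by fun_prop)
      ((measure_eq_zero_iff_ae_notMem.1 hμsupp).mono fun s hs ↦ abs_le.2 (not_notMem.1 hs))
  refine ⟨μ, hμ, f (-1) + a - (b - a) / 2 * ∫ s, s ∂μ, hμsupp, fun θ hθ ↦ ?_⟩
  rw [hrepr θ hθ, hνμ, hmass, integral_max_sub_eq_of_isProbabilityMeasure μ hid θ]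
  ring

/-- Every 1-Lipschitz convex function `f : [−1,1] → [−1,1]`, with right
derivative `a` at `−1` and left derivative `b` at `1`, can be written (up to an
additive constant) as a nonnegative combination of an average of absolute-value
functions with respect to a probability measure supported in `[−1,1]` and a
linear function. -/
theorem convex_lipschitz_hinge_representation
    (f : ℝ → ℝ)
    (hconv : ConvexOn ℝ (Set.Icc (-1 : ℝ) 1) f)
    (hlip : ∀ x ∈ Set.Icc (-1 : ℝ) 1, ∀ y ∈ Set.Icc (-1 : ℝ) 1, |f x - f y| ≤ |x - y|)
    (hrange : ∀ x ∈ Set.Icc (-1 : ℝ) 1, f x ∈ Set.Icc (-1 : ℝ) 1)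
    (a b : ℝ)
    (ha : HasDerivWithinAt f a (Set.Ici (-1 : ℝ)) (-1))
    (hb : HasDerivWithinAt f b (Set.Iic (1 : ℝ)) 1) :
    ∃ (μ : Measure ℝ) (_ : IsProbabilityMeasure μ) (c : ℝ),
      μ (Set.Icc (-1 : ℝ) 1)ᶜ = 0 ∧
      ∀ θ ∈ Set.Icc (-1 : ℝ) 1,
        f θ = (b - a) / 2 * (∫ s, |θ - s| ∂μ) + (a + b) / 2 * θ + c :=
  convex_lipschitz_hinge_representation_general f hconv hlip a b ha hb
end

section
/- Let T > 0 and let f : ℝ → ℝ be twice continuously differentiable on [0, 1] with |f″(x)| ≤ T for all x ∈ [0, 1]. Then for every positive integer k and every y ∈ [0, 1], the Bernstein polynomial of f of degree k satisfies |B_k(f; y) − f(y)| ≤ T/(8k). -/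
/-!
Bernstein polynomials reproduce affine functions, so `B_k(f; y) - f(y)` is the Bernstein average of
the first-order Taylor remainder of `f` at `y`. Since `f'` is `T`-Lipschitz, that remainder at `x`
is at most `T/2 · (x - y)²`, and the second central moment of the Bernstein weights is
`∑ (v/k - y)² b_{v,k}(y) = y(1 - y)/k ≤ 1/(4k)`.
-/

open Set Finset NNReal Polynomial

section Taylor

variable {E : Type*} [NormedAddCommGroup E] [NormedSpace ℝ E]

theorem norm_sub_sub_smul_le_of_lipschitzOnWith {f g : ℝ → E} {s : Set ℝ} {K : ℝ≥0}
    (hs : Convex ℝ s) (hf : ∀ t ∈ s, HasDerivWithinAt f (g t) s t) (hg : LipschitzOnWith K g s)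
    {x y : ℝ} (hx : x ∈ s) (hy : y ∈ s) :
    ‖f x - f y - (x - y) • g y‖ ≤ K / 2 * (x - y) ^ 2 := by
  -- Working on the segment `τ ↦ y + τ (x - y)`, `τ ∈ [0, 1]`, treats `x < y` and `y ≤ x` alike.
  have hseg : ∀ τ ∈ Icc (0 : ℝ) 1, y + τ * (x - y) ∈ s := fun τ hτ => hs.add_smul_sub_mem hy hx hτ
  have hφ : ∀ τ ∈ Icc (0 : ℝ) 1,
      HasDerivWithinAt (fun τ => f (y + τ * (x - y)) - f y - (τ * (x - y)) • g y)
        ((x - y) • (g (y + τ * (x - y)) - g y)) (Icc 0 1) τ := by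
    intro τ hτ
    have hline : HasDerivWithinAt (fun τ => y + τ * (x - y)) (x - y) (Icc 0 1) τ := by
      simpa using ((hasDerivWithinAt_id τ _).mul_const (x - y)).const_add y
    have hcomp := (hf _ (hseg τ hτ)).scomp τ hline hseg
    have hlin :
        HasDerivWithinAt (fun τ : ℝ => (τ * (x - y)) • g y) ((x - y) • g y) (Icc 0 1) τ := by
      simpa using ((hasDerivWithinAt_id τ _).mul_const (x - y)).smul_const (g y)
    rw [smul_sub]
    exact (hcomp.sub_const (f y)).sub hlin
  have hB : ∀ τ, HasDerivAt (fun τ : ℝ => K / 2 * (x - y) ^ 2 * τ ^ 2) (K * (x - y) ^ 2 * τ) τ :=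
    fun τ => ((hasDerivAt_pow 2 τ).const_mul _).congr_deriv (by norm_num; ring)
  have hbound : ∀ τ ∈ Ico (0 : ℝ) 1,
      ‖(x - y) • (g (y + τ * (x - y)) - g y)‖ ≤ K * (x - y) ^ 2 * τ := by
    intro τ hτ
    calc ‖(x - y) • (g (y + τ * (x - y)) - g y)‖
        ≤ |x - y| * (K * ‖y + τ * (x - y) - y‖) := by
          rw [norm_smul, Real.norm_eq_abs]
          gcongr
          exact hg.norm_sub_le (hseg τ (Ico_subset_Icc_self hτ)) hy
      _ = K * (x - y) ^ 2 * τ := by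
          rw [add_sub_cancel_left, Real.norm_eq_abs, abs_mul, abs_of_nonneg hτ.1, ← sq_abs (x - y)]
          ring
  have key := image_norm_le_of_norm_deriv_right_le_deriv_boundary
    (fun τ hτ => (hφ τ hτ).continuousWithinAt)
    (fun τ hτ => (hφ τ (Ico_subset_Icc_self hτ)).mono_of_mem_nhdsWithin
      (Filter.mem_of_superset (Icc_mem_nhdsGE hτ.2) (Icc_subset_Icc_left hτ.1)))
    (by simp) hB hbound (right_mem_Icc.2 zero_le_one)
  simpa using key

theorem lipschitzOnWith_derivWithin_of_nnnorm_iteratedDerivWithin_two_le {f : ℝ → E}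
    {s : Set ℝ} {K : ℝ≥0} (hs : Convex ℝ s) (hs' : UniqueDiffOn ℝ s) (hf : ContDiffOn ℝ 2 f s)
    (hf'' : ∀ x ∈ s, ‖iteratedDerivWithin 2 f s x‖₊ ≤ K) :
    LipschitzOnWith K (derivWithin f s) s := by
  refine hs.lipschitzOnWith_of_nnnorm_derivWithin_le
    ((hf.derivWithin hs' (m := 1) le_rfl).differentiableOn one_ne_zero) fun x hx => ?_
  simpa [iteratedDerivWithin_succ', iteratedDerivWithin_one] using hf'' x hx

end Taylor

namespace bernsteinPolynomial

section CommRing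

variable {R : Type*} [CommRing R]

theorem eval_eq (n ν : ℕ) (x : R) :
    (bernsteinPolynomial R n ν).eval x = n.choose ν * x ^ ν * (1 - x) ^ (n - ν) := by
  simp [bernsteinPolynomial]

theorem sum_eval (n : ℕ) (x : R) :
    ∑ ν ∈ range (n + 1), (bernsteinPolynomial R n ν).eval x = 1 := by
  simpa [eval_finsetSum] using congrArg (eval x) (bernsteinPolynomial.sum R n)

theorem sum_natCast_mul_eval (n : ℕ) (x : R) :
    ∑ ν ∈ range (n + 1), (ν : R) * (bernsteinPolynomial R n ν).eval x = n * x := by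
  simpa [eval_finsetSum, nsmul_eq_mul] using congrArg (eval x) (bernsteinPolynomial.sum_smul R n)

theorem sum_sub_sq_mul_eval (n : ℕ) (x : R) :
    ∑ ν ∈ range (n + 1), (n * x - ν) ^ 2 * (bernsteinPolynomial R n ν).eval x =
      n * x * (1 - x) := by
  simpa [eval_finsetSum, nsmul_eq_mul] using congrArg (eval x) (bernsteinPolynomial.variance R n)

end CommRing

variable {K : Type*} [Field K] [CharZero K] {n : ℕ}

theorem sum_div_sub_mul_eval (hn : n ≠ 0) (x : K) :
    ∑ ν ∈ range (n + 1), (ν / n - x) * (bernsteinPolynomial K n ν).eval x = 0 := by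
  have hn' : (n : K) ≠ 0 := Nat.cast_ne_zero.2 hn
  simp only [sub_mul, sum_sub_distrib, div_mul_eq_mul_div, ← sum_div, sum_natCast_mul_eval,
    ← mul_sum, sum_eval]
  field_simp
  ring

theorem sum_div_sub_sq_mul_eval (hn : n ≠ 0) (x : K) :
    ∑ ν ∈ range (n + 1), (ν / n - x) ^ 2 * (bernsteinPolynomial K n ν).eval x =
      x * (1 - x) / n := by
  have hn' : (n : K) ≠ 0 := Nat.cast_ne_zero.2 hn
  have hsq : ∀ ν : ℕ, ((ν : K) / n - x) ^ 2 = (n * x - ν) ^ 2 / n ^ 2 := fun ν => by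
    field_simp; ring
  simp only [hsq, div_mul_eq_mul_div, ← sum_div, sum_sub_sq_mul_eval]
  field_simp

end bernsteinPolynomial

/-- `B_k(f; y)`. -/
noncomputable def bernsteinSum (f : ℝ → ℝ) (k : ℕ) (y : ℝ) : ℝ :=
  ∑ v ∈ range (k + 1), f (v / k) * (bernsteinPolynomial ℝ k v).eval y

theorem bernsteinPolynomial_eval_nonneg (k v : ℕ) {y : ℝ} (hy : y ∈ Icc (0 : ℝ) 1) :
    0 ≤ (bernsteinPolynomial ℝ k v).eval y := by
  obtain ⟨hy0, hy1⟩ := hy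
  have hy1' : 0 ≤ 1 - y := sub_nonneg.2 hy1
  rw [bernsteinPolynomial.eval_eq]
  positivity

theorem bernsteinSum_sub_eq_sum {f : ℝ → ℝ} {k : ℕ} (hk : k ≠ 0) (y c : ℝ) :
    bernsteinSum f k y - f y = ∑ v ∈ range (k + 1),
      (f (v / k) - f y - c * (v / k - y)) * (bernsteinPolynomial ℝ k v).eval y := by
  have hterm : ∀ (v : ℕ) (b : ℝ), (f (v / k) - f y - c * (v / k - y)) * b =
      f (v / k) * b - f y * b - c * ((v / k - y) * b) := fun v b => by ring
  simp only [hterm, sum_sub_distrib, ← mul_sum, bernsteinPolynomial.sum_eval,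
    bernsteinPolynomial.sum_div_sub_mul_eval hk, bernsteinSum]
  ring

theorem abs_bernsteinSum_sub_le {f : ℝ → ℝ} {k : ℕ} (hk : k ≠ 0) {y c M : ℝ}
    (hy : y ∈ Icc (0 : ℝ) 1)
    (hM : ∀ x ∈ Icc (0 : ℝ) 1, |f x - f y - c * (x - y)| ≤ M * (x - y) ^ 2) :
    |bernsteinSum f k y - f y| ≤ M * (y * (1 - y)) / k := by
  have hnode : ∀ v ∈ range (k + 1), (v / k : ℝ) ∈ Icc (0 : ℝ) 1 := fun v hv => by
    have : (v : ℝ) ≤ k := by exact_mod_cast Nat.lt_succ_iff.1 (mem_range.1 hv)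
    exact ⟨by positivity, div_le_one_of_le₀ this (Nat.cast_nonneg k)⟩
  rw [bernsteinSum_sub_eq_sum hk y c, mul_div_assoc,
    ← bernsteinPolynomial.sum_div_sub_sq_mul_eval hk, mul_sum]
  refine (abs_sum_le_sum_abs _ _).trans (sum_le_sum fun v hv => ?_)
  have hb := bernsteinPolynomial_eval_nonneg k v hy
  rw [abs_mul, abs_of_nonneg hb, ← mul_assoc]
  exact mul_le_mul_of_nonneg_right (hM _ (hnode v hv)) hb

/-- If `f : ℝ → ℝ` is twice continuously differentiable on `[0,1]` with second
derivative bounded by `T` there, then for every positive integer `k` and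
`y ∈ [0,1]` the Bernstein polynomial of `f` of degree `k` satisfies
`|B_k(f; y) − f(y)| ≤ T/(8k)`. -/
theorem bernstein_approx_of_C2 (T : ℝ) (hT : 0 < T) (f : ℝ → ℝ)
    (hf : ContDiffOn ℝ 2 f (Set.Icc (0 : ℝ) 1))
    (hf'' : ∀ x ∈ Set.Icc (0 : ℝ) 1,
      |iteratedDerivWithin 2 f (Set.Icc (0 : ℝ) 1) x| ≤ T)
    (k : ℕ) (hk : 0 < k) (y : ℝ) (hy : y ∈ Set.Icc (0 : ℝ) 1) :
    |(∑ v ∈ Finset.range (k + 1),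
        f ((v : ℝ) / k) * (k.choose v : ℝ) * y ^ v * (1 - y) ^ (k - v)) - f y|
      ≤ T / (8 * k) := by
  have hlip : LipschitzOnWith T.toNNReal (derivWithin f (Icc 0 1)) (Icc 0 1) :=
    lipschitzOnWith_derivWithin_of_nnnorm_iteratedDerivWithin_two_le (convex_Icc 0 1)
      (uniqueDiffOn_Icc zero_lt_one) hf fun x hx => by
        rw [Real.le_toNNReal_iff_coe_le hT.le, coe_nnnorm]; exact hf'' x hx
  have htaylor : ∀ x ∈ Icc (0 : ℝ) 1,
      |f x - f y - derivWithin f (Icc 0 1) y * (x - y)| ≤ T / 2 * (x - y) ^ 2 := fun x hx => by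
    simpa [mul_comm, Real.coe_toNNReal T hT.le] using
      norm_sub_sub_smul_le_of_lipschitzOnWith (convex_Icc 0 1)
        (fun t ht => (hf.differentiableOn two_ne_zero t ht).hasDerivWithinAt) hlip hx hy
  have hvar : y * (1 - y) ≤ 1 / 4 := by nlinarith [sq_nonneg (y - 1 / 2)]
  calc _ = |bernsteinSum f k y - f y| := by
        simp only [bernsteinSum, bernsteinPolynomial.eval_eq, mul_assoc]
    _ ≤ T / 2 * (y * (1 - y)) / k := abs_bernsteinSum_sub_le hk.ne' hy htaylor
    _ ≤ T / 2 * (1 / 4) / k := by gcongr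
    _ = T / (8 * k) := by field_simp; ring
end
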